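/- The number of Schröder m-paths with exactly j flat steps equals the number of Schröder m-paths with exactly j peaks, where a peak is an up step immediately followed by a down step. -/

import Mathlib

/-- Steps of a Schröder path: up `(1,1)`, down `(1,-1)`, flat `(2,0)`. -/
inductive SchStep | U | D | F
deriving DecidableEq, BEq

/-- Horizontal displacement of a step. -/
def SchStep.x : SchStep → ℕ
  | .U => 1
  | .D => 1
  | .F => 2

/-- Vertical displacement of a step. -/
def SchStep.h : SchStep → ℤ
  | .U => 1
  | .D => -1
  | .F => 0

/-- `p` is a Schröder `m`-path: it goes from `(0,0)` to `(2m,0)` using steps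
`(1,1)`, `(1,-1)`, `(2,0)` and never goes below the `x`-axis. -/
def IsSchroderPath (m : ℕ) (p : List SchStep) : Prop :=
  (p.map SchStep.x).sum = 2 * m ∧ (p.map SchStep.h).sum = 0 ∧
    ∀ q : List SchStep, q <+: p → 0 ≤ (q.map SchStep.h).sum

/-- The number of peaks of a path: positions where an up step is immediately
followed by a down step. -/
def numPeaks (p : List SchStep) : ℕ :=
  (List.range p.length).countP
    (fun i => decide (p.getD i SchStep.F = SchStep.U ∧ p.getD (i + 1) SchStep.F = SchStep.D))

/-!
Scanning a path from left to right, replace every flat step `F` by a peak `U D` and every peak by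
a flat step. This map is an involution, and since peaks never overlap, the flat steps of the image
correspond to the peaks of the path. Since `F` and `U D` have the same displacement, endpoints are
kept, and every prefix of the image is at least as high as some prefix of the original path, so
Schröder paths go to Schröder paths.
-/

open List

def flatPeakSwap : List SchStep → List SchStep
  | [] => []
  | .F :: rest => .U :: .D :: flatPeakSwap rest
  | .U :: .D :: rest => .F :: flatPeakSwap rest
  | .U :: rest => .U :: flatPeakSwap rest
  | .D :: rest => .D :: flatPeakSwap rest

theorem flatPeakSwap_D_cons (l : List SchStep) :
    flatPeakSwap (.D :: l) = .D :: flatPeakSwap l := by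
  cases l with
  | nil => rfl
  | cons a t => cases a <;> rfl

theorem flatPeakSwap_ne_D_cons {l : List SchStep} (hl : ∀ r, l ≠ .D :: r) (r : List SchStep) :
    flatPeakSwap l ≠ .D :: r := by
  cases l using flatPeakSwap.fun_cases with
  | case4 rest h => simp [flatPeakSwap.eq_4 _ h]
  | case5 rest => exact absurd rfl (hl rest)
  | _ => simp [flatPeakSwap]

theorem flatPeakSwap_involutive : Function.Involutive flatPeakSwap := by
  intro p
  induction p using flatPeakSwap.induct with
  | case1 => rfl
  | case2 rest ih => simp [flatPeakSwap, ih]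
  | case3 rest ih => simp [flatPeakSwap, ih]
  | case4 rest h ih =>
    rw [flatPeakSwap.eq_4 _ h, flatPeakSwap.eq_4 _ (flatPeakSwap_ne_D_cons h), ih]
  | case5 rest ih => rw [flatPeakSwap_D_cons, flatPeakSwap_D_cons, ih]

theorem sum_map_flatPeakSwap {M : Type*} [AddCommMonoid M] (f : SchStep → M)
    (hf : f .U + f .D = f .F) (p : List SchStep) :
    ((flatPeakSwap p).map f).sum = (p.map f).sum := by
  induction p using flatPeakSwap.induct with
  | case1 => rfl
  | case2 rest ih => simp [flatPeakSwap, ih, ← hf, add_assoc]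
  | case3 rest ih => simp [flatPeakSwap, ih, ← hf, add_assoc]
  | case4 rest h ih => simp [flatPeakSwap.eq_4 _ h, ih]
  | case5 rest ih => simp [flatPeakSwap_D_cons, ih]

theorem numPeaks_cons (a : SchStep) (l : List SchStep) :
    numPeaks (a :: l) = (if a = .U ∧ l.head? = some .D then 1 else 0) + numPeaks l := by
  unfold numPeaks
  rw [length_cons, range_succ_eq_map, countP_cons, countP_map, add_comm]
  cases l <;> simp [Function.comp_def]

theorem count_F_flatPeakSwap (p : List SchStep) : (flatPeakSwap p).count .F = numPeaks p := by
  induction p using flatPeakSwap.induct with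
  | case1 => rfl
  | case2 rest ih => simp +decide [flatPeakSwap, numPeaks_cons, count_cons, ih]
  | case3 rest ih => simp +decide [flatPeakSwap, numPeaks_cons, count_cons, ih, add_comm]
  | case4 rest h ih =>
    have hD : rest.head? ≠ some .D := by cases rest <;> simp_all
    simp +decide [flatPeakSwap.eq_4 _ h, numPeaks_cons, count_cons, ih, hD]
  | case5 rest ih => simp +decide [flatPeakSwap_D_cons, numPeaks_cons, count_cons, ih]

def PrefixHeightDominates (l' l : List SchStep) : Prop :=
  ∀ q, q <+: l' → ∃ r, r <+: l ∧ (r.map SchStep.h).sum ≤ (q.map SchStep.h).sum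

theorem PrefixHeightDominates.refl (l : List SchStep) : PrefixHeightDominates l l :=
  fun q hq => ⟨q, hq, le_rfl⟩

theorem PrefixHeightDominates.append {s t l' l : List SchStep} (hst : PrefixHeightDominates s t)
    (hsum : (t.map SchStep.h).sum ≤ (s.map SchStep.h).sum) (h : PrefixHeightDominates l' l) :
    PrefixHeightDominates (s ++ l') (t ++ l) := by
  intro q hq
  rcases prefix_or_prefix_of_prefix hq (prefix_append s l') with hqs | ⟨u, rfl⟩
  · obtain ⟨r, hr, hle⟩ := hst q hqs
    exact ⟨r, hr.trans (prefix_append t l), hle⟩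
  · obtain ⟨r, hr, hle⟩ := h u ((prefix_append_right_inj s).1 hq)
    exact ⟨t ++ r, (prefix_append_right_inj t).2 hr, by simpa using add_le_add hsum hle⟩

theorem prefixHeightDominates_UD_F : PrefixHeightDominates [.U, .D] [.F] := by
  intro q hq
  refine ⟨[], nil_prefix, ?_⟩
  rw [← mem_inits] at hq
  simp only [inits, map_cons, map_nil, mem_cons, not_mem_nil, or_false] at hq
  rcases hq with rfl | rfl | rfl <;> simp [SchStep.h]

theorem prefixHeightDominates_F_UD : PrefixHeightDominates [.F] [.U, .D] := by
  intro q hq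
  refine ⟨[], nil_prefix, ?_⟩
  rw [← mem_inits] at hq
  simp only [inits, map_cons, map_nil, mem_cons, not_mem_nil, or_false] at hq
  rcases hq with rfl | rfl <;> simp [SchStep.h]

theorem prefixHeightDominates_flatPeakSwap (p : List SchStep) :
    PrefixHeightDominates (flatPeakSwap p) p := by
  induction p using flatPeakSwap.induct with
  | case1 => exact .refl []
  | case2 rest ih =>
    exact prefixHeightDominates_UD_F.append (by simp [SchStep.h]) ih
  | case3 rest ih =>
    exact prefixHeightDominates_F_UD.append (by simp [SchStep.h]) ih
  | case4 rest h ih =>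
    rw [flatPeakSwap.eq_4 _ h]
    exact PrefixHeightDominates.append (s := [.U]) (.refl _) le_rfl ih
  | case5 rest ih =>
    rw [flatPeakSwap_D_cons]
    exact PrefixHeightDominates.append (s := [.D]) (.refl _) le_rfl ih

theorem IsSchroderPath.flatPeakSwap {m : ℕ} {p : List SchStep} (hp : IsSchroderPath m p) :
    IsSchroderPath m (flatPeakSwap p) := by
  obtain ⟨hx, hh, hnonneg⟩ := hp
  refine ⟨by rwa [sum_map_flatPeakSwap _ rfl], by rwa [sum_map_flatPeakSwap _ rfl], ?_⟩
  intro q hq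
  obtain ⟨r, hr, hle⟩ := prefixHeightDominates_flatPeakSwap p q hq
  exact (hnonneg r hr).trans hle

theorem isSchroderPath_flatPeakSwap_iff {m : ℕ} {p : List SchStep} :
    IsSchroderPath m (flatPeakSwap p) ↔ IsSchroderPath m p :=
  ⟨fun hp => flatPeakSwap_involutive p ▸ hp.flatPeakSwap, IsSchroderPath.flatPeakSwap⟩

/-- The number of Schröder `m`-paths with exactly `j` flat steps equals the
number of Schröder `m`-paths with exactly `j` peaks. -/
theorem schroder_flats_eq_peaks (m j : ℕ) :
    Set.ncard {p : List SchStep | IsSchroderPath m p ∧ p.count SchStep.F = j} =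
    Set.ncard {p : List SchStep | IsSchroderPath m p ∧ numPeaks p = j} := by
  have hpeaks : {p : List SchStep | IsSchroderPath m p ∧ numPeaks p = j} =
      flatPeakSwap ⁻¹' {p | IsSchroderPath m p ∧ p.count SchStep.F = j} := by
    ext p
    simp [isSchroderPath_flatPeakSwap_iff, count_F_flatPeakSwap]
  rw [hpeaks, Set.ncard_preimage_of_injective_subset_range flatPeakSwap_involutive.injective
    (by simp [flatPeakSwap_involutive.surjective.range_eq])]
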